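/- Suppose u, v : ℝ³ → ℝ are smooth, v_x is nowhere zero, and (u,v) satisfies the nonlinear Lax system at every point of ℝ³. Then u is a smooth solution of the dispersionless Nizhnik equation, i.e. u_{txy} = (u_{xx}u_{xy})_x + (u_{xy}u_{yy})_y holds at every point of ℝ³. -/

import Mathlib

/-- Partial derivative with respect to `t` of a function on `ℝ³ = ℝ × ℝ × ℝ` with
coordinates `(t, x, y)`. -/
noncomputable def pt (u : ℝ × ℝ × ℝ → ℝ) : ℝ × ℝ × ℝ → ℝ :=
  fun p => deriv (fun s => u (s, p.2.1, p.2.2)) p.1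

/-- Partial derivative with respect to `x`. -/
noncomputable def px (u : ℝ × ℝ × ℝ → ℝ) : ℝ × ℝ × ℝ → ℝ :=
  fun p => deriv (fun s => u (p.1, s, p.2.2)) p.2.1

/-- Partial derivative with respect to `y`. -/
noncomputable def py (u : ℝ × ℝ × ℝ → ℝ) : ℝ × ℝ × ℝ → ℝ :=
  fun p => deriv (fun s => u (p.1, p.2.1, s)) p.2.2

/-- The pair `(u, v)` satisfies, at every point of `ℝ³`, the nonlinear Lax system
`v_t = (1/3)(v_x³ − u_{xy}³/v_x³) + u_{xx}v_x − u_{xy}u_{yy}/v_x`,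
`v_y = −u_{xy}/v_x`. -/
def SatisfiesLax (u v : ℝ × ℝ × ℝ → ℝ) : Prop :=
  ∀ p : ℝ × ℝ × ℝ,
    pt v p = (1 / 3) * ((px v p) ^ 3 - (px (py u) p) ^ 3 / (px v p) ^ 3) +
      px (px u) p * px v p - px (py u) p * py (py u) p / px v p ∧
    py v p = -(px (py u) p) / px v p

private lemma lineT (p : ℝ × ℝ × ℝ) :
    HasDerivAt (fun s : ℝ => ((s, p.2.1, p.2.2) : ℝ × ℝ × ℝ)) ((1, 0, 0) : ℝ × ℝ × ℝ) p.1 :=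
  (hasDerivAt_id _).prodMk ((hasDerivAt_const _ _).prodMk (hasDerivAt_const _ _))

private lemma lineX (p : ℝ × ℝ × ℝ) :
    HasDerivAt (fun s : ℝ => ((p.1, s, p.2.2) : ℝ × ℝ × ℝ)) ((0, 1, 0) : ℝ × ℝ × ℝ) p.2.1 :=
  (hasDerivAt_const _ _).prodMk ((hasDerivAt_id _).prodMk (hasDerivAt_const _ _))

private lemma lineY (p : ℝ × ℝ × ℝ) :
    HasDerivAt (fun s : ℝ => ((p.1, p.2.1, s) : ℝ × ℝ × ℝ)) ((0, 0, 1) : ℝ × ℝ × ℝ) p.2.2 :=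
  (hasDerivAt_const _ _).prodMk ((hasDerivAt_const _ _).prodMk (hasDerivAt_id _))

private lemma pt_eq {f : ℝ × ℝ × ℝ → ℝ} {p : ℝ × ℝ × ℝ} (hf : DifferentiableAt ℝ f p) :
    pt f p = fderiv ℝ f p (1, 0, 0) := by
  have h := hf.hasFDerivAt.comp_hasDerivAt p.1 (lineT p)
  simp only [pt]
  exact h.deriv

private lemma px_eq {f : ℝ × ℝ × ℝ → ℝ} {p : ℝ × ℝ × ℝ} (hf : DifferentiableAt ℝ f p) :
    px f p = fderiv ℝ f p (0, 1, 0) := by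
  have h := hf.hasFDerivAt.comp_hasDerivAt p.2.1 (lineX p)
  simp only [px]
  exact h.deriv

private lemma py_eq {f : ℝ × ℝ × ℝ → ℝ} {p : ℝ × ℝ × ℝ} (hf : DifferentiableAt ℝ f p) :
    py f p = fderiv ℝ f p (0, 0, 1) := by
  have h := hf.hasFDerivAt.comp_hasDerivAt p.2.2 (lineY p)
  simp only [py]
  exact h.deriv

private lemma contDiff_pt {f : ℝ × ℝ × ℝ → ℝ} (hf : ContDiff ℝ (⊤ : ℕ∞) f) : ContDiff ℝ (⊤ : ℕ∞) (pt f) := by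
  have : pt f = fun p => fderiv ℝ f p (1, 0, 0) :=
    funext fun p => pt_eq ((hf.differentiable (by simp)).differentiableAt)
  rw [this]
  exact (hf.fderiv_right (by simp)).clm_apply contDiff_const

private lemma contDiff_px {f : ℝ × ℝ × ℝ → ℝ} (hf : ContDiff ℝ (⊤ : ℕ∞) f) : ContDiff ℝ (⊤ : ℕ∞) (px f) := by
  have : px f = fun p => fderiv ℝ f p (0, 1, 0) :=
    funext fun p => px_eq ((hf.differentiable (by simp)).differentiableAt)
  rw [this]
  exact (hf.fderiv_right (by simp)).clm_apply contDiff_const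

private lemma contDiff_py {f : ℝ × ℝ × ℝ → ℝ} (hf : ContDiff ℝ (⊤ : ℕ∞) f) : ContDiff ℝ (⊤ : ℕ∞) (py f) := by
  have : py f = fun p => fderiv ℝ f p (0, 0, 1) :=
    funext fun p => py_eq ((hf.differentiable (by simp)).differentiableAt)
  rw [this]
  exact (hf.fderiv_right (by simp)).clm_apply contDiff_const

private lemma ht {f : ℝ × ℝ × ℝ → ℝ} (hf : ContDiff ℝ (⊤ : ℕ∞) f) (p : ℝ × ℝ × ℝ) :
    HasDerivAt (fun s => f (s, p.2.1, p.2.2)) (pt f p) p.1 := by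
  have hd := (hf.differentiable (by simp)).differentiableAt (x := p)
  rw [pt_eq hd]
  exact hd.hasFDerivAt.comp_hasDerivAt p.1 (lineT p)

private lemma hdx {f : ℝ × ℝ × ℝ → ℝ} (hf : ContDiff ℝ (⊤ : ℕ∞) f) (p : ℝ × ℝ × ℝ) :
    HasDerivAt (fun s => f (p.1, s, p.2.2)) (px f p) p.2.1 := by
  have hd := (hf.differentiable (by simp)).differentiableAt (x := p)
  rw [px_eq hd]
  exact hd.hasFDerivAt.comp_hasDerivAt p.2.1 (lineX p)

private lemma hdy {f : ℝ × ℝ × ℝ → ℝ} (hf : ContDiff ℝ (⊤ : ℕ∞) f) (p : ℝ × ℝ × ℝ) :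
    HasDerivAt (fun s => f (p.1, p.2.1, s)) (py f p) p.2.2 := by
  have hd := (hf.differentiable (by simp)).differentiableAt (x := p)
  rw [py_eq hd]
  exact hd.hasFDerivAt.comp_hasDerivAt p.2.2 (lineY p)

private lemma symm2 (f : ℝ × ℝ × ℝ → ℝ) (hf : ContDiff ℝ (⊤ : ℕ∞) f) (p e₁ e₂ : ℝ × ℝ × ℝ) :
    fderiv ℝ (fun q => fderiv ℝ f q e₂) p e₁ = fderiv ℝ (fun q => fderiv ℝ f q e₁) p e₂ := by
  have hf1 : ∀ q, HasFDerivAt f (fderiv ℝ f q) q := fun q =>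
    ((hf.differentiable (by simp)) q).hasFDerivAt
  have hf2 : HasFDerivAt (fderiv ℝ f) (fderiv ℝ (fderiv ℝ f) p) p :=
    (((hf.fderiv_right (m := (⊤ : ℕ∞)) (by simp)).differentiable (by simp)) p).hasFDerivAt
  have key : ∀ e : ℝ × ℝ × ℝ, fderiv ℝ (fun q => fderiv ℝ f q e) p =
      (ContinuousLinearMap.apply ℝ ℝ e).comp (fderiv ℝ (fderiv ℝ f) p) :=
    fun e => ((ContinuousLinearMap.apply ℝ ℝ e).hasFDerivAt.comp p hf2).fderiv
  rw [key e₂, key e₁]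
  simpa using second_derivative_symmetric hf1 hf2 e₁ e₂

private lemma comm_px_py {f : ℝ × ℝ × ℝ → ℝ} (hf : ContDiff ℝ (⊤ : ℕ∞) f) (p : ℝ × ℝ × ℝ) :
    px (py f) p = py (px f) p := by
  have hdf := hf.differentiable (by simp)
  have h1 : py f = fun q => fderiv ℝ f q (0, 0, 1) := funext fun q => py_eq (hdf q)
  have h2 : px f = fun q => fderiv ℝ f q (0, 1, 0) := funext fun q => px_eq (hdf q)
  rw [px_eq (((contDiff_py hf).differentiable (by simp)) p), h1,
      py_eq (((contDiff_px hf).differentiable (by simp)) p), h2]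
  exact symm2 f hf p _ _

private lemma comm_pt_px {f : ℝ × ℝ × ℝ → ℝ} (hf : ContDiff ℝ (⊤ : ℕ∞) f) (p : ℝ × ℝ × ℝ) :
    pt (px f) p = px (pt f) p := by
  have hdf := hf.differentiable (by simp)
  have h1 : px f = fun q => fderiv ℝ f q (0, 1, 0) := funext fun q => px_eq (hdf q)
  have h2 : pt f = fun q => fderiv ℝ f q (1, 0, 0) := funext fun q => pt_eq (hdf q)
  rw [pt_eq (((contDiff_px hf).differentiable (by simp)) p), h1,
      px_eq (((contDiff_pt hf).differentiable (by simp)) p), h2]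
  exact symm2 f hf p _ _

private lemma comm_pt_py {f : ℝ × ℝ × ℝ → ℝ} (hf : ContDiff ℝ (⊤ : ℕ∞) f) (p : ℝ × ℝ × ℝ) :
    pt (py f) p = py (pt f) p := by
  have hdf := hf.differentiable (by simp)
  have h1 : py f = fun q => fderiv ℝ f q (0, 0, 1) := funext fun q => py_eq (hdf q)
  have h2 : pt f = fun q => fderiv ℝ f q (1, 0, 0) := funext fun q => pt_eq (hdf q)
  rw [pt_eq (((contDiff_py hf).differentiable (by simp)) p), h1,
      py_eq (((contDiff_pt hf).differentiable (by simp)) p), h2]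
  exact symm2 f hf p _ _

private lemma dN_alg (w wx b bx b_y a ax c cy : ℝ) (hw : w ≠ 0) :
    -((1 / 3 *
          (3 * w ^ 2 * -((bx * w - b * wx) / w ^ 2) -
            (3 * b ^ 2 * b_y * w ^ 3 -
              b ^ 3 * (3 * w ^ 2 * -((bx * w - b * wx) / w ^ 2))) / (w ^ 3) ^ 2) +
        (bx * w + a * -((bx * w - b * wx) / w ^ 2)) -
        ((b_y * c + b * cy) * w - b * c * -((bx * w - b * wx) / w ^ 2)) / w ^ 2) * w +
      -b / w *
        (1 / 3 * (3 * w ^ 2 * wx - (3 * b ^ 2 * bx * w ^ 3 - b ^ 3 * (3 * w ^ 2 * wx)) / (w ^ 3) ^ 2) +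
          (ax * w + a * wx) - ((bx * c + b * b_y) * w - b * c * wx) / w ^ 2)) =
    (ax * b + a * bx) + (b_y * c + b * cy) := by
  field_simp
  ring

theorem lax_implies_dN (u v : ℝ × ℝ × ℝ → ℝ)
    (hu : ContDiff ℝ (⊤ : ℕ∞) u) (hv : ContDiff ℝ (⊤ : ℕ∞) v)
    (hvx : ∀ p : ℝ × ℝ × ℝ, px v p ≠ 0) (huv : SatisfiesLax u v) :
    ∀ p : ℝ × ℝ × ℝ,
      pt (px (py u)) p =
        px (fun q => px (px u) q * px (py u) q) p +
        py (fun q => px (py u) q * py (py u) q) p := by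
  intro p
  have hw : ContDiff ℝ (⊤ : ℕ∞) (px v) := contDiff_px hv
  have hpyv : ContDiff ℝ (⊤ : ℕ∞) (py v) := contDiff_py hv
  have ha : ContDiff ℝ (⊤ : ℕ∞) (px (px u)) := contDiff_px (contDiff_px hu)
  have hb : ContDiff ℝ (⊤ : ℕ∞) (px (py u)) := contDiff_px (contDiff_py hu)
  have hc : ContDiff ℝ (⊤ : ℕ∞) (py (py u)) := contDiff_py (contDiff_py hu)
  have hE1fn : pt v = fun q => 1 / 3 * (px v q ^ 3 - px (py u) q ^ 3 / px v q ^ 3) +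
      px (px u) q * px v q - px (py u) q * py (py u) q / px v q :=
    funext fun q => (huv q).1
  have hbfn : px (py u) = fun q => -(py v q * px v q) := by
    funext q
    rw [(huv q).2, neg_div, neg_mul, neg_neg, div_mul_cancel₀ _ (hvx q)]
  have h0 : pt (px (py u)) p = -(pt (py v) p * px v p + py v p * pt (px v) p) := by
    rw [hbfn]
    exact (((ht hpyv p).mul (ht hw p)).neg).deriv
  rw [comm_pt_py hv p, comm_pt_px hv p, hE1fn, (huv p).2] at h0
  have hPx : px (fun q => 1 / 3 * (px v q ^ 3 - px (py u) q ^ 3 / px v q ^ 3) +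
      px (px u) q * px v q - px (py u) q * py (py u) q / px v q) p =
      1 / 3 * ((3 * px v p ^ 2 * px (px v) p) -
        (3 * px (py u) p ^ 2 * px (px (py u)) p * px v p ^ 3 -
          px (py u) p ^ 3 * (3 * px v p ^ 2 * px (px v) p)) / (px v p ^ 3) ^ 2) +
      (px (px (px u)) p * px v p + px (px u) p * px (px v) p) -
      ((px (px (py u)) p * py (py u) p + px (py u) p * px (py (py u)) p) * px v p -
        px (py u) p * py (py u) p * px (px v) p) / px v p ^ 2 :=
    ((((((hdx hw p).pow 3).sub (((hdx hb p).pow 3).div ((hdx hw p).pow 3)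
        (pow_ne_zero 3 (hvx p)))).const_mul (1/3 : ℝ)).add
      ((hdx ha p).mul (hdx hw p))).sub
      (((hdx hb p).mul (hdx hc p)).div (hdx hw p) (hvx p))).deriv.trans (by simp only [Prod.mk.eta, Pi.neg_apply, Pi.pow_apply, Pi.mul_apply, Pi.div_apply, Pi.add_apply, Pi.sub_apply]; push_cast; ring)
  have hPy : py (fun q => 1 / 3 * (px v q ^ 3 - px (py u) q ^ 3 / px v q ^ 3) +
      px (px u) q * px v q - px (py u) q * py (py u) q / px v q) p =
      1 / 3 * ((3 * px v p ^ 2 * py (px v) p) -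
        (3 * px (py u) p ^ 2 * py (px (py u)) p * px v p ^ 3 -
          px (py u) p ^ 3 * (3 * px v p ^ 2 * py (px v) p)) / (px v p ^ 3) ^ 2) +
      (py (px (px u)) p * px v p + px (px u) p * py (px v) p) -
      ((py (px (py u)) p * py (py u) p + px (py u) p * py (py (py u)) p) * px v p -
        px (py u) p * py (py u) p * py (px v) p) / px v p ^ 2 :=
    ((((((hdy hw p).pow 3).sub (((hdy hb p).pow 3).div ((hdy hw p).pow 3)
        (pow_ne_zero 3 (hvx p)))).const_mul (1/3 : ℝ)).add
      ((hdy ha p).mul (hdy hw p))).sub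
      (((hdy hb p).mul (hdy hc p)).div (hdy hw p) (hvx p))).deriv.trans (by simp only [Prod.mk.eta, Pi.neg_apply, Pi.pow_apply, Pi.mul_apply, Pi.div_apply, Pi.add_apply, Pi.sub_apply]; push_cast; ring)
  rw [hPx, hPy] at h0
  have hwy : py (px v) p =
      -((px (px (py u)) p * px v p - px (py u) p * px (px v) p) / px v p ^ 2) := by
    rw [← comm_px_py hv p,
      show py v = fun q => -(px (py u) q) / px v q from funext fun q => (huv q).2]
    exact ((hdx hb p).neg.div (hdx hw p) (hvx p)).deriv.trans (by simp only [Prod.mk.eta, Pi.neg_apply, Pi.pow_apply, Pi.mul_apply, Pi.div_apply, Pi.add_apply, Pi.sub_apply]; ring)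
  have hay : py (px (px u)) p = px (px (py u)) p := by
    rw [← comm_px_py (contDiff_px hu) p,
      show py (px u) = px (py u) from funext fun q => (comm_px_py hu q).symm]
  have hcx : px (py (py u)) p = py (px (py u)) p := comm_px_py (contDiff_py hu) p
  rw [hwy, hay, hcx] at h0
  have hab : px (fun q => px (px u) q * px (py u) q) p =
      px (px (px u)) p * px (py u) p + px (px u) p * px (px (py u)) p :=
    ((hdx ha p).mul (hdx hb p)).deriv
  have hbc : py (fun q => px (py u) q * py (py u) q) p =
      py (px (py u)) p * py (py u) p + px (py u) p * py (py (py u)) p :=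
    ((hdy hb p).mul (hdy hc p)).deriv
  rw [h0, hab, hbc]
  exact dN_alg (px v p) (px (px v) p) (px (py u) p) (px (px (py u)) p) (py (px (py u)) p)
    (px (px u) p) (px (px (px u)) p) (py (py u) p) (py (py (py u)) p) (hvx p)
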